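/- arXiv:1203.2446 — 15 statements merged into one kernel-verified Lean document; each statement's English description precedes it below -/
import Mathlib

section
/- For every H with 1/2 ≤ H < 1, setting p = 2(1-H), one has for all t ≥ 0: B_H(t) ≤ (3 exp(-p t/2) - exp(-3 p t/2))/2. -/
/-!
Put `y = exp (-t) ∈ (0, 1]` and multiply both sides by `(2 + 4H) exp (-(1 + H) t)`. The claim
becomes an inequality between combinations of the powers `y ^ (1 + 2H)`, `y ^ (2 + 2H)`,
`y ^ (4 - 2H)` and `(1 - y) ^ (2H + 2)`. Since `e ↦ z ^ e` is convex, each of these powers lies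
below the chord through the neighbouring integer exponents, and for `1/2 ≤ H ≤ 1` the resulting
polynomial bounds on the two sides coincide identically.
-/

open Real

/-- Correlation function of the stationary Gaussian process dual to the
integrated fractional Brownian motion `I_H`. -/
noncomputable def dualCorrIFBM (H s : ℝ) : ℝ :=
  (2 + 4 * H)⁻¹ *
    ((2 + 2 * H) * (exp (H * s) + exp (-(H * s))) - exp ((1 + H) * s)
      - exp (-((1 + H) * s)) + (exp (s / 2) - exp (-(s / 2))) ^ (2 * H + 2))

/-- `hne` is needed because `0 ^ 0 = 1`. -/
lemma rpow_le_chord {z w : ℝ} (a b : ℝ) (hz : 0 ≤ z) (hw0 : 0 ≤ w) (hw1 : w ≤ 1)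
    (hne : w * a + (1 - w) * b ≠ 0) :
    z ^ (w * a + (1 - w) * b) ≤ w * z ^ a + (1 - w) * z ^ b := by
  rw [rpow_add' hz hne, mul_comm w, mul_comm (1 - w), rpow_mul hz, rpow_mul hz]
  exact geom_mean_le_arith_mean2_weighted hw0 (by linarith) (rpow_nonneg hz a)
    (rpow_nonneg hz b) (by ring)

lemma dualCorrIFBM_reduced_le {H y : ℝ} (hH0 : 1 / 2 ≤ H) (hH1 : H ≤ 1) (hy0 : 0 ≤ y)
    (hy1 : y ≤ 1) :
    (2 + 2 * H) * (y + y ^ (1 + 2 * H)) - 1 - y ^ (2 + 2 * H) + (1 - y) ^ (2 * H + 2)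
      ≤ (1 + 2 * H) * (3 * y ^ 2 - y ^ (4 - 2 * H)) := by
  have hu := rpow_le_chord 2 3 hy0 (w := 2 - 2 * H) (by linarith) (by linarith)
    (ne_of_gt (by linarith))
  have hv := rpow_le_chord 2 3 hy0 (w := 2 * H - 1) (by linarith) (by linarith)
    (ne_of_gt (by linarith))
  have hs := rpow_le_chord 3 4 (sub_nonneg.2 hy1) (w := 2 - 2 * H) (by linarith) (by linarith)
    (ne_of_gt (by linarith))
  rw [show (2 - 2 * H) * 2 + (1 - (2 - 2 * H)) * 3 = 1 + 2 * H by ring] at hu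
  rw [show (2 * H - 1) * 2 + (1 - (2 * H - 1)) * 3 = 4 - 2 * H by ring] at hv
  rw [show (2 - 2 * H) * 3 + (1 - (2 - 2 * H)) * 4 = 2 * H + 2 by ring] at hs
  simp only [rpow_ofNat] at hu hv hs
  have hyu : y ^ (2 + 2 * H) = y * y ^ (1 + 2 * H) := by
    rw [show 2 + 2 * H = 1 + (1 + 2 * H) by ring, rpow_add' hy0 (by linarith), rpow_one]
  rw [hyu]
  linarith [mul_le_mul_of_nonneg_left hu (by linarith : 0 ≤ 2 + 2 * H - y),
    mul_le_mul_of_nonneg_left hv (by linarith : 0 ≤ 1 + 2 * H)]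

lemma dualCorrIFBM_mul_exp {t : ℝ} (H : ℝ) (ht : 0 ≤ t) :
    dualCorrIFBM H t * exp (-((1 + H) * t))
      = (2 + 4 * H)⁻¹ * ((2 + 2 * H) * (exp (-t) + exp (-t) ^ (1 + 2 * H)) - 1
          - exp (-t) ^ (2 + 2 * H) + (1 - exp (-t)) ^ (2 * H + 2)) := by
  have hsinh : (exp (t / 2) - exp (-(t / 2))) ^ (2 * H + 2) * exp (-((1 + H) * t))
      = (1 - exp (-t)) ^ (2 * H + 2) := by
    rw [show exp (-((1 + H) * t)) = exp (-(t / 2)) ^ (2 * H + 2) by rw [← exp_mul]; ring_nf,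
      ← mul_rpow (sub_nonneg.2 (exp_le_exp.2 (by linarith))) (exp_pos _).le, sub_mul,
      ← exp_add, ← exp_add, add_neg_cancel, exp_zero]
    ring_nf
  set E := exp (-((1 + H) * t))
  have e1 : exp (H * t) * E = exp (-t) := by rw [← exp_add]; ring_nf
  have e2 : exp (-(H * t)) * E = exp (-t) ^ (1 + 2 * H) := by rw [← exp_add, ← exp_mul]; ring_nf
  have e3 : exp ((1 + H) * t) * E = 1 := by rw [← exp_add, add_neg_cancel, exp_zero]
  have e4 : E * E = exp (-t) ^ (2 + 2 * H) := by rw [← exp_add, ← exp_mul]; ring_nf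
  rw [dualCorrIFBM, mul_assoc]
  congr 1
  linear_combination (2 + 2 * H) * e1 + (2 + 2 * H) * e2 - e3 - e4 + hsinh

lemma exp_bound_mul_exp (H t : ℝ) :
    (3 * exp (-(2 * (1 - H) * t) / 2) - exp (-(3 * (2 * (1 - H)) * t) / 2)) / 2
        * exp (-((1 + H) * t))
      = (3 * exp (-t) ^ 2 - exp (-t) ^ (4 - 2 * H)) / 2 := by
  have e1 : exp (-(2 * (1 - H) * t) / 2) * exp (-((1 + H) * t)) = exp (-t) ^ 2 := by
    rw [← exp_add, ← exp_nat_mul]; ring_nf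
  have e2 : exp (-(3 * (2 * (1 - H)) * t) / 2) * exp (-((1 + H) * t))
      = exp (-t) ^ (4 - 2 * H) := by
    rw [← exp_add, ← exp_mul]; ring_nf
  linear_combination (3 / 2) * e1 - (1 / 2) * e2

theorem stmt_1 (H : ℝ) (hH0 : 1 / 2 ≤ H) (hH1 : H < 1) (p : ℝ) (hp : p = 2 * (1 - H))
    (t : ℝ) (ht : 0 ≤ t) :
    dualCorrIFBM H t ≤ (3 * exp (-(p * t) / 2) - exp (-(3 * p * t) / 2)) / 2 := by
  subst hp
  rw [← mul_le_mul_iff_of_pos_right (exp_pos (-((1 + H) * t))), dualCorrIFBM_mul_exp H ht,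
    exp_bound_mul_exp, inv_mul_le_iff₀ (by linarith)]
  calc _ ≤ (1 + 2 * H) * (3 * exp (-t) ^ 2 - exp (-t) ^ (4 - 2 * H)) :=
        dualCorrIFBM_reduced_le hH0 hH1.le (exp_pos _).le (exp_le_one_iff.2 (by linarith))
    _ = _ := by ring
end

section
/- For every H with 0 < H ≤ 1/2, setting p = 2 * sqrt((1-H^2)/3), one has for all t ≥ 0: B_H(t) ≥ (3 exp(-p t/2) - exp(-3 p t/2))/2. -/
/-!
With `v = e^{-t}`, `y = e^{-2Ht}` and `w = (1 - e^{-t})^{2H}`, the function `B = B_H`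
satisfies `B'' + 2p B' + (3p²/4) B = 2(H+1) e^{(1+H)t} (N - p D) / (2 + 4H)` for explicit
polynomials `N = odeNum`, `D = odeDen` in `v, y, w`, since `3p²/4 = 1 - H²`. Elementary bounds
on `y` and `w` (from `1 + x ≤ e^x`, the logarithmic series and Bernoulli's inequality) together
with `p ≤ 1 + (1 - 4H²)/6` make `N - p D` nonnegative. The right-hand side `R` of the inequality
solves `R'' + 2p R' + (3p²/4) R = 0` with the same initial data `R(0) = B(0) = 1`,
`R'(0) = B'(0) = 0`. Since the operator factors as `(d/dt + p/2)(d/dt + 3p/2)`, two first-order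
comparisons give `B - R ≥ 0`.
-/

open Real

open Set

theorem nonneg_of_deriv_add_mul_nonneg {f f' : ℝ → ℝ} (a : ℝ)
    (hf : ContinuousOn f (Ici 0)) (hderiv : ∀ s > 0, HasDerivAt f (f' s) s) (h0 : 0 ≤ f 0)
    (h : ∀ s > 0, 0 ≤ f' s + a * f s) {t : ℝ} (ht : 0 ≤ t) : 0 ≤ f t := by
  -- Integrating factor: the derivative of `exp (a s) f s` is `exp (a s) (f' s + a f s)`.
  have hmono : MonotoneOn (fun s => exp (a * s) * f s) (Ici 0) := by
    refine monotoneOn_of_hasDerivWithinAt_nonneg (f' := fun s => exp (a * s) * (f' s + a * f s))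
      (convex_Ici 0) ((by fun_prop : Continuous fun s => exp (a * s)).continuousOn.mul hf)
      (fun s hs => ?_) (fun s hs => ?_) <;> rw [interior_Ici] at hs
    · refine (((hasDerivAt_const_mul a).exp.mul (hderiv s hs)).congr_deriv ?_).hasDerivWithinAt
      ring
    · exact mul_nonneg (exp_pos _).le (h s hs)
  have := hmono self_mem_Ici ht ht
  simp only [mul_zero, exp_zero, one_mul] at this
  exact nonneg_of_mul_nonneg_right (h0.trans this) (exp_pos _)

theorem nonneg_of_factored_second_order {f f' f'' : ℝ → ℝ} (a b : ℝ)
    (hf : ∀ s ≥ 0, HasDerivAt f (f' s) s) (hf' : ContinuousOn f' (Ici 0))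
    (hf'' : ∀ s > 0, HasDerivAt f' (f'' s) s) (h0 : 0 ≤ f 0) (h0' : 0 ≤ f' 0 + b * f 0)
    (h : ∀ s > 0, 0 ≤ f'' s + (a + b) * f' s + a * b * f s) {t : ℝ} (ht : 0 ≤ t) :
    0 ≤ f t := by
  have hfc : ContinuousOn f (Ici 0) := fun s hs => (hf s hs).continuousAt.continuousWithinAt
  have hg : ∀ s ≥ 0, 0 ≤ f' s + b * f s := fun s hs =>
    nonneg_of_deriv_add_mul_nonneg (f := fun s => f' s + b * f s) a
      (hf'.add (continuousOn_const.mul hfc))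
      (fun s hs => (hf'' s hs).add ((hf s hs.le).const_mul b)) h0'
      (fun s hs => by linear_combination h s hs) hs
  exact nonneg_of_deriv_add_mul_nonneg b hfc (fun s hs => hf s hs.le) h0
    (fun s hs => hg s hs.le) ht

theorem add_sq_div_two_le_neg_log_one_sub {v : ℝ} (h0 : 0 ≤ v) (h1 : v < 1) :
    v + v ^ 2 / 2 ≤ -log (1 - v) := by
  have := sum_le_hasSum (Finset.range 2) (fun n _ => by positivity)
    (hasSum_pow_div_log_of_abs_lt_one (abs_lt.2 ⟨by linarith, h1⟩))
  norm_num [Finset.sum_range_succ] at this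
  exact this

theorem exp_neg_mul_one_add_le {c : ℝ} (hc : 0 ≤ c) (t : ℝ) :
    exp (-t) * (1 + c * (1 - exp (-t))) ≤ exp ((c - 1) * t) := by
  have h1 : 1 - exp (-t) ≤ t := by linarith [add_one_le_exp (-t)]
  calc exp (-t) * (1 + c * (1 - exp (-t))) ≤ exp (-t) * (1 + c * t) := by gcongr
    _ ≤ exp (-t) * exp (c * t) := by gcongr; linarith [add_one_le_exp (c * t)]
    _ = exp ((c - 1) * t) := by rw [← exp_add]; ring_nf

theorem mul_one_add_le_rpow_one_sub {c v : ℝ} (hc : 0 ≤ c) (h0 : 0 ≤ v) (h1 : v < 1) :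
    (1 - v) * (1 + c * (v + v ^ 2 / 2)) ≤ (1 - v) ^ (1 - c) := by
  have hpos : 0 < 1 - v := by linarith
  calc (1 - v) * (1 + c * (v + v ^ 2 / 2)) ≤ (1 - v) * (1 + c * -log (1 - v)) := by
        gcongr; exact add_sq_div_two_le_neg_log_one_sub h0 h1
    _ ≤ (1 - v) * exp (c * -log (1 - v)) := by
        gcongr; linarith [add_one_le_exp (c * -log (1 - v))]
    _ = (1 - v) ^ (1 - c) := by
        rw [rpow_sub hpos, rpow_one, rpow_def_of_pos hpos, div_eq_mul_inv, ← exp_neg]; ring_nf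

noncomputable def odeNum (H v y w : ℝ) : ℝ :=
  (v - 1) + v * y * (1 - v) + w * ((1 - v) ^ 2 + (2 * H + 1) * v)

noncomputable def odeDen (H v y w : ℝ) : ℝ :=
  (1 - 2 * H * v) + v * y * (2 * H - v) - w * (1 - v ^ 2)

theorem odeDen_nonneg {H v y w : ℝ} (hH0 : 0 ≤ H) (hH1 : H ≤ 1 / 2) (hv0 : 0 ≤ v)
    (hv1 : v ≤ 1) (hy0 : 0 ≤ y) (hy1 : y ≤ 1) (hw : w ≤ 1 - 2 * H * v) :
    0 ≤ odeDen H v y w := by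
  have hw' : w * (1 - v ^ 2) ≤ (1 - 2 * H * v) * (1 - v ^ 2) :=
    mul_le_mul_of_nonneg_right hw (by nlinarith)
  rw [odeDen]
  rcases le_or_gt v (2 * H) with h | h
  · nlinarith [mul_nonneg (mul_nonneg hv0 hy0) (by linarith : (0:ℝ) ≤ 2 * H - v),
      mul_nonneg (by nlinarith : (0:ℝ) ≤ 1 - 2 * H * v) (sq_nonneg v)]
  · nlinarith [mul_le_mul_of_nonneg_left hy1 (by nlinarith : (0:ℝ) ≤ v * (v - 2 * H)),
      mul_nonneg (mul_nonneg hH0 hv0) (by nlinarith : (0:ℝ) ≤ 1 - v ^ 2)]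

theorem mul_odeDen_le_odeNum {H p v y w : ℝ} (hH0 : 0 ≤ H) (hH1 : H ≤ 1 / 2)
    (hp : p ≤ 1 + (1 - 4 * H ^ 2) / 6) (hv0 : 0 < v) (hv1 : v < 1)
    (hyl : v * (1 + (1 - 2 * H) * (1 - v)) ≤ y) (hyu : y ≤ 1)
    (hwl : (1 - v) * (1 + (1 - 2 * H) * (v + v ^ 2 / 2)) ≤ w) (hwu : w ≤ 1 - 2 * H * v) :
    p * odeDen H v y w ≤ odeNum H v y w := by
  have hd0 : (0:ℝ) ≤ 1 - 2 * H := by linarith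
  have hc0 : (0:ℝ) ≤ (1 - 4 * H ^ 2) / 6 := by nlinarith
  have hD := odeDen_nonneg hH0 hH1 hv0.le hv1.le
    (by nlinarith [mul_nonneg hd0 (by linarith : (0:ℝ) ≤ 1 - v)]) hyu hwu
  have hCy : 0 ≤ v * ((1 - 2 * H) + (1 - 4 * H ^ 2) / 6 * (v - 2 * H)) :=
    mul_nonneg hv0.le (by nlinarith [mul_nonneg hc0 hv0.le])
  have hCw : 0 ≤ (1 - v) ^ 2 + (2 * H + 1) * v + (1 + (1 - 4 * H ^ 2) / 6) * (1 - v ^ 2) := by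
    nlinarith [sq_nonneg (1 - v), mul_nonneg hc0 (by nlinarith : (0:ℝ) ≤ 1 - v ^ 2)]
  have hR : 0 ≤ 2 + (1 - 2 * H) * (1 - 3 * v - v ^ 2) + (1 - 2 * H) ^ 2 * (5 + v ^ 2) / 2
      - (1 - 2 * H) ^ 3 := by
    nlinarith [mul_nonneg (mul_nonneg hd0 (by linarith : (0:ℝ) ≤ 1 - v))
        (by linarith : (0:ℝ) ≤ 4 + v),
      mul_nonneg (mul_nonneg (mul_nonneg hd0 hd0) (by linarith : (0:ℝ) ≤ 1 - v))
        (by linarith : (0:ℝ) ≤ 1 + v),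
      pow_le_one₀ hd0 (by linarith : (1:ℝ) - 2 * H ≤ 1) (n := 3),
      mul_nonneg hd0 (sq_nonneg (1 - 2 * H))]
  have hS : 0 ≤ ((1 - 2 * H) / 6) * v ^ 2 * (1 - v) * (2 + (1 - 2 * H) * (1 - 3 * v - v ^ 2)
      + (1 - 2 * H) ^ 2 * (5 + v ^ 2) / 2 - (1 - 2 * H) ^ 3) :=
    mul_nonneg (mul_nonneg (mul_nonneg (by linarith) (sq_nonneg v)) (by linarith)) hR
  -- At the largest admissible `p`, the difference is `hS` plus nonnegative multiples of the
  -- slacks in the lower bounds on `y` and `w`.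
  have hkey : odeNum H v y w - (1 + (1 - 4 * H ^ 2) / 6) * odeDen H v y w
      = ((1 - 2 * H) / 6) * v ^ 2 * (1 - v) * (2 + (1 - 2 * H) * (1 - 3 * v - v ^ 2)
          + (1 - 2 * H) ^ 2 * (5 + v ^ 2) / 2 - (1 - 2 * H) ^ 3)
        + (v * ((1 - 2 * H) + (1 - 4 * H ^ 2) / 6 * (v - 2 * H)))
          * (y - v * (1 + (1 - 2 * H) * (1 - v)))
        + ((1 - v) ^ 2 + (2 * H + 1) * v + (1 + (1 - 4 * H ^ 2) / 6) * (1 - v ^ 2))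
          * (w - (1 - v) * (1 + (1 - 2 * H) * (v + v ^ 2 / 2))) := by
    rw [odeNum, odeDen]; ring
  nlinarith [mul_le_mul_of_nonneg_right hp hD, mul_nonneg hCy (sub_nonneg.2 hyl),
    mul_nonneg hCw (sub_nonneg.2 hwl)]

noncomputable def corrNum (H s : ℝ) : ℝ :=
  (2 + 2 * H) * (exp (H * s) + exp (-(H * s))) - exp ((1 + H) * s)
    - exp (-((1 + H) * s)) + (exp (s / 2) - exp (-(s / 2))) ^ (2 * H + 2)

noncomputable def corrNumDeriv (H s : ℝ) : ℝ :=
  (2 + 2 * H) * H * (exp (H * s) - exp (-(H * s)))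
    - (1 + H) * (exp ((1 + H) * s) - exp (-((1 + H) * s)))
    + (2 * H + 2) * ((exp (s / 2) + exp (-(s / 2))) / 2)
      * (exp (s / 2) - exp (-(s / 2))) ^ (2 * H + 1)

noncomputable def corrNumDeriv2 (H s : ℝ) : ℝ :=
  (2 + 2 * H) * H ^ 2 * (exp (H * s) + exp (-(H * s)))
    - (1 + H) ^ 2 * (exp ((1 + H) * s) + exp (-((1 + H) * s)))
    + (2 * H + 2) * ((2 * H + 1) * ((exp (s / 2) + exp (-(s / 2))) / 2) ^ 2
        * (exp (s / 2) - exp (-(s / 2))) ^ (2 * H)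
      + (exp (s / 2) - exp (-(s / 2))) / 4 * (exp (s / 2) - exp (-(s / 2))) ^ (2 * H + 1))

theorem hasDerivAt_exp_half_sub (s : ℝ) :
    HasDerivAt (fun x => exp (x / 2) - exp (-(x / 2))) ((exp (s / 2) + exp (-(s / 2))) / 2) s := by
  have h := ((hasDerivAt_id s).div_const 2).exp.sub ((hasDerivAt_id s).div_const 2).neg.exp
  refine h.congr_deriv ?_
  simp only [Pi.neg_apply, id]; ring

theorem hasDerivAt_exp_half_add (s : ℝ) :
    HasDerivAt (fun x => (exp (x / 2) + exp (-(x / 2))) / 2)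
      ((exp (s / 2) - exp (-(s / 2))) / 4) s := by
  have h :=
    (((hasDerivAt_id s).div_const 2).exp.add ((hasDerivAt_id s).div_const 2).neg.exp).div_const 2
  refine h.congr_deriv ?_
  simp only [Pi.neg_apply, id]; ring

theorem hasDerivAt_exp_mul_add_exp_neg (a s : ℝ) :
    HasDerivAt (fun x => exp (a * x) + exp (-(a * x))) (a * (exp (a * s) - exp (-(a * s)))) s := by
  have h := (hasDerivAt_const_mul a).exp.add (hasDerivAt_const_mul a).neg.exp (x := s)
  refine h.congr_deriv ?_
  simp only [Pi.neg_apply]; ring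

theorem hasDerivAt_exp_mul_sub_exp_neg (a s : ℝ) :
    HasDerivAt (fun x => exp (a * x) - exp (-(a * x))) (a * (exp (a * s) + exp (-(a * s)))) s := by
  have h := (hasDerivAt_const_mul a).exp.sub (hasDerivAt_const_mul a).neg.exp (x := s)
  refine h.congr_deriv ?_
  simp only [Pi.neg_apply]; ring

theorem hasDerivAt_corrNum {H : ℝ} (hH : -1 / 2 ≤ H) (s : ℝ) :
    HasDerivAt (corrNum H) (corrNumDeriv H s) s := by
  have h := ((((hasDerivAt_exp_mul_add_exp_neg H s).const_mul (2 + 2 * H)).sub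
    ((hasDerivAt_const_mul (1 + H)).exp)).sub ((hasDerivAt_const_mul (1 + H)).neg.exp)).add
    ((hasDerivAt_exp_half_sub s).rpow_const (p := 2 * H + 2) (Or.inr (by linarith)))
  refine h.congr_deriv ?_
  rw [corrNumDeriv, show 2 * H + 2 - 1 = 2 * H + 1 by ring]
  simp only [Pi.neg_apply]; ring

theorem hasDerivAt_corrNumDeriv {H : ℝ} (hH : 0 ≤ H) (s : ℝ) :
    HasDerivAt (corrNumDeriv H) (corrNumDeriv2 H s) s := by
  have h := ((((hasDerivAt_exp_mul_sub_exp_neg H s).const_mul ((2 + 2 * H) * H)).sub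
    ((hasDerivAt_exp_mul_sub_exp_neg (1 + H) s).const_mul (1 + H))).add
    (((hasDerivAt_exp_half_add s).const_mul (2 * H + 2)).mul
      ((hasDerivAt_exp_half_sub s).rpow_const (p := 2 * H + 1) (Or.inr (by linarith)))))
  refine h.congr_deriv ?_
  rw [corrNumDeriv2, show 2 * H + 1 - 1 = 2 * H by ring]
  ring

theorem corrNum_zero (H : ℝ) (hH : H ≠ -1) : corrNum H 0 = 2 + 4 * H := by
  rw [corrNum]
  simp only [mul_zero, exp_zero, neg_zero, zero_div, sub_self, add_zero,
    zero_rpow (show 2 * H + 2 ≠ 0 by contrapose! hH; linarith)]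
  ring

theorem corrNumDeriv_zero (H : ℝ) (hH : H ≠ -1 / 2) : corrNumDeriv H 0 = 0 := by
  rw [corrNumDeriv]; simp [zero_rpow (show 2 * H + 1 ≠ 0 by contrapose! hH; linarith)]

theorem corrNum_ode_combination_eq (H p : ℝ) {t : ℝ} (ht : 0 < t) :
    corrNumDeriv2 H t + 2 * p * corrNumDeriv H t + (1 - H ^ 2) * corrNum H t =
      2 * (H + 1) * exp ((1 + H) * t) *
        (odeNum H (exp (-t)) (exp (-(2 * H * t))) ((1 - exp (-t)) ^ (2 * H))
          - p * odeDen H (exp (-t)) (exp (-(2 * H * t))) ((1 - exp (-t)) ^ (2 * H))) := by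
  have hsplit : exp (t / 2) - exp (-(t / 2)) = exp (t / 2) * (1 - exp (-t)) := by
    rw [mul_sub, mul_one, ← exp_add]; ring_nf
  have hpos : 0 < exp (t / 2) - exp (-(t / 2)) := by
    rw [sub_pos, exp_lt_exp]; linarith
  have hpow :
      (exp (t / 2) - exp (-(t / 2))) ^ (2 * H) = exp (H * t) * (1 - exp (-t)) ^ (2 * H) := by
    rw [hsplit, mul_rpow (exp_pos _).le (by rw [sub_nonneg, exp_le_one_iff]; linarith), ← exp_mul]
    ring_nf
  rw [corrNum, corrNumDeriv, corrNumDeriv2, odeNum, odeDen, rpow_add hpos, rpow_add hpos,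
    rpow_one, rpow_two, hpow]
  generalize (1 - exp (-t)) ^ (2 * H) = w
  have e1 : exp (-(H * t)) = (exp (H * t))⁻¹ := exp_neg _
  have e2 : exp ((1 + H) * t) = exp (t / 2) ^ 2 * exp (H * t) := by
    rw [← exp_nat_mul, ← exp_add]; ring_nf
  have e3 : exp (-((1 + H) * t)) = (exp (t / 2) ^ 2 * exp (H * t))⁻¹ := by rw [exp_neg, e2]
  have e4 : exp (-(t / 2)) = (exp (t / 2))⁻¹ := exp_neg _
  have e5 : exp (-t) = (exp (t / 2) ^ 2)⁻¹ := by rw [← exp_nat_mul, ← exp_neg]; ring_nf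
  have e6 : exp (-(2 * H * t)) = (exp (H * t) ^ 2)⁻¹ := by
    rw [← exp_nat_mul, ← exp_neg]; ring_nf
  rw [e1, e2, e3, e4, e5, e6]
  have := (exp_pos (t / 2)).ne'
  have := (exp_pos (H * t)).ne'
  field_simp
  ring

theorem corrNum_ode_combination_nonneg {H p t : ℝ} (hH0 : 0 ≤ H) (hH1 : H ≤ 1 / 2)
    (hp : p ≤ 1 + (1 - 4 * H ^ 2) / 6) (ht : 0 < t) :
    0 ≤ corrNumDeriv2 H t + 2 * p * corrNumDeriv H t + (1 - H ^ 2) * corrNum H t := by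
  have hv0 : 0 < exp (-t) := exp_pos _
  have hv1 : exp (-t) < 1 := exp_lt_one_iff.2 (by linarith)
  rw [corrNum_ode_combination_eq H p ht]
  refine mul_nonneg (by positivity)
    (sub_nonneg.2 (mul_odeDen_le_odeNum hH0 hH1 hp hv0 hv1 ?_ ?_ ?_ ?_))
  · convert exp_neg_mul_one_add_le (by linarith : 0 ≤ 1 - 2 * H) t using 2
    ring
  · exact exp_le_one_iff.2 (by nlinarith)
  · convert mul_one_add_le_rpow_one_sub (by linarith : 0 ≤ 1 - 2 * H) hv0.le hv1 using 2
    ring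
  · convert rpow_one_add_le_one_add_mul_self (by linarith : -1 ≤ -exp (-t))
      (by linarith : 0 ≤ 2 * H) (by linarith) using 1 <;> ring_nf

noncomputable def corrLowerBound (p s : ℝ) : ℝ :=
  (3 * exp (-(p * s) / 2) - exp (-(3 * p * s) / 2)) / 2

noncomputable def corrLowerBoundDeriv (p s : ℝ) : ℝ :=
  3 * p / 4 * (exp (-(3 * p * s) / 2) - exp (-(p * s) / 2))

theorem hasDerivAt_corrLowerBound (p s : ℝ) :
    HasDerivAt (corrLowerBound p) (corrLowerBoundDeriv p s) s := by
  have h := ((((hasDerivAt_const_mul p).neg.div_const 2).exp.const_mul 3).sub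
    ((hasDerivAt_const_mul (3 * p)).neg.div_const 2).exp).div_const 2 (x := s)
  refine h.congr_deriv ?_
  rw [corrLowerBoundDeriv]; simp only [Pi.neg_apply]; ring

theorem hasDerivAt_corrLowerBoundDeriv (p s : ℝ) :
    HasDerivAt (corrLowerBoundDeriv p)
      (3 * p ^ 2 / 8 * (exp (-(p * s) / 2) - 3 * exp (-(3 * p * s) / 2))) s := by
  have h := (((hasDerivAt_const_mul (3 * p)).neg.div_const 2).exp.sub
    ((hasDerivAt_const_mul p).neg.div_const 2).exp).const_mul (3 * p / 4) (x := s)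
  refine h.congr_deriv ?_
  simp only [Pi.neg_apply]; ring

theorem stmt_2 (H : ℝ) (hH0 : 0 < H) (hH1 : H ≤ 1 / 2) (p : ℝ)
    (hp : p = 2 * Real.sqrt ((1 - H ^ 2) / 3)) (t : ℝ) (ht : 0 ≤ t) :
    (3 * exp (-(p * t) / 2) - exp (-(3 * p * t) / 2)) / 2 ≤ dualCorrIFBM H t := by
  have hc : 0 ≤ (2 + 4 * H)⁻¹ := by positivity
  have hp2 : p ^ 2 = 4 * (1 - H ^ 2) / 3 := by
    rw [hp, mul_pow, sq_sqrt (by nlinarith)]; ring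
  -- `(1 + (1 - 4H²)/6)² - p² = ((1 - 4H²)/6)²`
  have hpmax : p ≤ 1 + (1 - 4 * H ^ 2) / 6 :=
    le_of_sq_le_sq (by rw [hp2]; nlinarith [sq_nonneg ((1 - 4 * H ^ 2) / 6)]) (by nlinarith)
  have hB0 : (2 + 4 * H)⁻¹ * corrNum H 0 = 1 := by
    rw [corrNum_zero H (by linarith)]; exact inv_mul_cancel₀ (by linarith)
  have hderiv (s : ℝ) :=
    ((hasDerivAt_corrNum (H := H) (by linarith) s).const_mul (2 + 4 * H)⁻¹).sub
      (hasDerivAt_corrLowerBound p s)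
  have hderiv2 (s : ℝ) := ((hasDerivAt_corrNumDeriv hH0.le s).const_mul (2 + 4 * H)⁻¹).sub
    (hasDerivAt_corrLowerBoundDeriv p s)
  refine sub_nonneg.1 (nonneg_of_factored_second_order (p / 2) (3 * p / 2)
    (fun s _ => hderiv s) (fun s _ => (hderiv2 s).continuousAt.continuousWithinAt)
    (fun s _ => hderiv2 s) (by norm_num [hB0, corrLowerBound])
    (by norm_num [hB0, corrLowerBound, corrLowerBoundDeriv, corrNumDeriv_zero H (by linarith)])
    (fun s hs => ?_) ht)
  refine (mul_nonneg hc (corrNum_ode_combination_nonneg hH0.le hH1 hpmax hs)).trans_eq ?_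
  -- `corrLowerBound p` solves `R'' + 2p R' + (3p²/4) R = 0`, and `3p²/4 = 1 - H²`.
  simp only [Pi.sub_apply, corrLowerBound, corrLowerBoundDeriv]
  linear_combination (-3 / 4 * (2 + 4 * H)⁻¹ * corrNum H s) * hp2
end

section
/- For every t ≥ 0, (3 exp(-t/2) - exp(-3t/2))/2 ≤ 1/cosh(t/2). -/
open Real

theorem one_div_cosh_eq_exp_neg (s : ℝ) :
    1 / cosh s = 2 * exp (-s) / (1 + exp (-s) ^ 2) := by
  have hs : exp s * exp (-s) = 1 := by rw [← exp_add, add_neg_cancel, exp_zero]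
  rw [cosh_eq, div_eq_div_iff (by positivity) (by positivity)]
  linear_combination -hs

-- The gap `4 - (3 - x²)(1 + x²)` is the square `(x² - 1)²`.
theorem three_mul_sub_pow_three_div_two_le {x : ℝ} (hx : 0 ≤ x) :
    (3 * x - x ^ 3) / 2 ≤ 2 * x / (1 + x ^ 2) := by
  rw [div_le_div_iff₀ two_pos (by positivity)]
  nlinarith [mul_nonneg hx (sq_nonneg (x ^ 2 - 1))]

theorem stmt_3_general (t : ℝ) :
    (3 * exp (-t / 2) - exp (-(3 * t) / 2)) / 2 ≤ 1 / cosh (t / 2) := by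
  have hcube : exp (-(3 * t) / 2) = exp (-t / 2) ^ 3 := by
    rw [← exp_nat_mul]; ring_nf
  rw [hcube, one_div_cosh_eq_exp_neg, neg_div]
  exact three_mul_sub_pow_three_div_two_le (exp_pos _).le

theorem stmt_3 (t : ℝ) (ht : 0 ≤ t) :
    (3 * exp (-t / 2) - exp (-(3 * t) / 2)) / 2 ≤ 1 / cosh (t / 2) :=
  stmt_3_general t
end

section
/- For every t ≥ 0, (3 exp(-t/2) - exp(-3t/2))/2 ≥ 1/cosh(t). -/
open Real

/-- The factorisation `(3x - x³)(1 + x⁴) - 4x² = x (1 - x)² (3 + 2x - 2x³ - x⁴)` shows the difference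
is nonnegative on `[0, 1]`. -/
lemma two_mul_sq_div_one_add_pow_four_le {x : ℝ} (h0 : 0 ≤ x) (h1 : x ≤ 1) :
    2 * x ^ 2 / (1 + x ^ 4) ≤ (3 * x - x ^ 3) / 2 := by
  have hcofactor : 0 ≤ 3 + 2 * x - 2 * x ^ 3 - x ^ 4 := by
    have hx3 : x ^ 3 ≤ x := by nlinarith [mul_le_one₀ h1 h0 h1]
    have hx4 : x ^ 4 ≤ 1 := pow_le_one₀ h0 h1
    linarith
  have hdiff : 0 ≤ x * ((1 - x) ^ 2 * (3 + 2 * x - 2 * x ^ 3 - x ^ 4)) := by positivity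
  rw [div_le_div_iff₀ (by positivity) two_pos]
  nlinarith [hdiff]

lemma one_div_cosh_eq (t : ℝ) :
    1 / cosh t = 2 * exp (-t / 2) ^ 2 / (1 + exp (-t / 2) ^ 4) := by
  have hsq : exp (-t / 2) ^ 2 = exp (-t) := by rw [← exp_nat_mul]; ring_nf
  have hfour : exp (-t / 2) ^ 4 = exp (-t) ^ 2 := by rw [← hsq]; ring
  rw [hsq, hfour, cosh_eq, exp_neg]
  field_simp

theorem stmt_4 (t : ℝ) (ht : 0 ≤ t) :
    1 / cosh t ≤ (3 * exp (-t / 2) - exp (-(3 * t) / 2)) / 2 := by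
  have hcube : exp (-(3 * t) / 2) = exp (-t / 2) ^ 3 := by rw [← exp_nat_mul]; ring_nf
  rw [one_div_cosh_eq, hcube]
  exact two_mul_sq_div_one_add_pow_four_le (exp_pos _).le (exp_le_one_iff.mpr (by linarith))
end

section
/- Let 0 < H ≤ exp(-2)/2 and set p = ln(1/(2H))/H. Then for every t ≥ 0: cosh(H p t) - (1/2) * (2 sinh(p t / 2))^{2H} ≥ max(1 - t^{2H}, 0). -/
/-!
Put `L = log (1 / (2H)) ≥ 2`, so that `2H = e^{-L}`, `p = 2L e^L` and `H p t = L t`.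
Bounding `2 sinh x` by `e^x` gives `B̃(pt) ≥ e^{-Lt} / 2 ≥ 0`; bounding it by `2x e^x` gives
`B̃(pt) ≥ 1 - p^{2H} e^{Lt} t^{2H} / 2`, which is at least `1 - t^{2H}` as long as
`p^{2H} e^{Lt} ≤ 2`, i.e. for `Lt ≤ 3/20`. For `Lt ≥ 3/20` the first bound wins: since
`1 - t^{2H} ≤ 2H log (1/t)`, it remains to check the elementary inequality
`2 log (1/t) ≤ e^{L(1-t)}`, using `L ≥ 2` for `t ≥ 3/40` and `L ≥ 3/(20t)` for `t ≤ 3/40`.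
-/

open Real

/-- The correlation function `B̃_{w_H}` of the stationary process dual to fractional Brownian
motion. -/
noncomputable def fbmDualCorr (H s : ℝ) : ℝ :=
  cosh (H * s) - 1 / 2 * (2 * sinh (s / 2)) ^ (2 * H)

lemma two_sinh_le_exp (x : ℝ) : 2 * sinh x ≤ exp x := by
  rw [sinh_eq]
  linarith [exp_pos (-x)]

lemma two_sinh_le_two_mul_mul_exp (x : ℝ) : 2 * sinh x ≤ 2 * x * exp x := by
  have h : exp (-x) = exp x * exp (-(2 * x)) := by rw [← exp_add]; ring_nf
  rw [sinh_eq]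
  nlinarith [add_one_le_exp (-(2 * x)), exp_pos x]

lemma two_sinh_rpow_le {a x b : ℝ} (ha : 0 ≤ a) (hx : 0 ≤ x) (hb : 2 * sinh x ≤ b) :
    (2 * sinh x) ^ a ≤ b ^ a :=
  rpow_le_rpow (by have := sinh_nonneg_iff.2 hx; positivity) hb ha

section fbmDualCorr

variable {H s : ℝ}

lemma exp_neg_div_two_le_fbmDualCorr (hH : 0 ≤ H) (hs : 0 ≤ s) :
    exp (-(H * s)) / 2 ≤ fbmDualCorr H s := by
  have h := two_sinh_rpow_le (a := 2 * H) (by positivity) (by positivity) (two_sinh_le_exp (s / 2))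
  rw [← exp_mul, show s / 2 * (2 * H) = H * s by ring] at h
  rw [fbmDualCorr, cosh_eq]
  linarith

lemma one_sub_le_fbmDualCorr (hH : 0 ≤ H) (hs : 0 ≤ s) :
    1 - s ^ (2 * H) * exp (H * s) / 2 ≤ fbmDualCorr H s := by
  have h := two_sinh_rpow_le (a := 2 * H) (by positivity) (by positivity) (two_sinh_le_two_mul_mul_exp (s / 2))
  rw [mul_rpow (by positivity) (exp_pos _).le, ← exp_mul,
    show 2 * (s / 2) = s by ring, show s / 2 * (2 * H) = H * s by ring] at h
  rw [fbmDualCorr]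
  linarith [one_le_cosh (H * s)]

end fbmDualCorr

lemma one_sub_rpow_le_neg_mul_log {t : ℝ} (ht : 0 < t) (a : ℝ) : 1 - t ^ a ≤ -(a * log t) := by
  rw [rpow_def_of_pos ht, mul_comm]
  linarith [add_one_le_exp (a * log t)]

lemma le_exp_of_le_sum_range {x c : ℝ} (n : ℕ) (hx : 0 ≤ x)
    (h : c ≤ ∑ i ∈ Finset.range n, x ^ i / i.factorial) : c ≤ exp x :=
  h.trans (sum_le_exp_of_nonneg hx n)

lemma four_mul_exp_neg_two_le : 4 * exp (-2) ≤ log 2 - 3 / 20 := by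
  have h : (7.38 : ℝ) ≤ exp 2 :=
    le_exp_of_le_sum_range 10 (by norm_num) (by norm_num [Finset.sum_range_succ, Nat.factorial])
  have : 4 * exp (-2) ≤ 4 / 7.38 := by
    rw [exp_neg, ← div_eq_mul_inv]
    exact div_le_div_of_nonneg_left (by norm_num) (by norm_num) h
  linarith [log_two_gt_d9]

lemma log_forty_div_three_le : log (40 / 3) ≤ 13 / 5 := by
  rw [log_le_iff_le_exp (by norm_num)]
  exact le_exp_of_le_sum_range 12 (by norm_num) (by norm_num [Finset.sum_range_succ, Nat.factorial])

lemma le_exp_seventeen_div_ten : 27 / 5 ≤ exp (17 / 10) :=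
  le_exp_of_le_sum_range 8 (by norm_num) (by norm_num [Finset.sum_range_succ, Nat.factorial])

lemma mul_exp_neg_le {L : ℝ} (hL : 2 ≤ L) : L * exp (-L) ≤ 2 * exp (-2) := by
  have h : exp (-2) = exp (-L) * exp (L - 2) := by rw [← exp_add]; ring_nf
  nlinarith [add_one_le_exp (L - 2), exp_pos (-L)]

lemma rpow_exp_neg_mul_exp_le_two {L t : ℝ} (hL : 2 ≤ L) (hLt : L * t ≤ 3 / 20) :
    (2 * L * exp L) ^ exp (-L) * exp (L * t) ≤ 2 := by
  have hlog : log (2 * L * exp L) ≤ 2 * L := by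
    rw [log_mul (by positivity) (exp_pos L).ne', log_exp, log_mul two_ne_zero (by positivity)]
    linarith [log_le_sub_one_of_pos (by positivity : (0 : ℝ) < L), log_two_lt_d9]
  have hexp : log (2 * L * exp L) * exp (-L) ≤ 4 * exp (-2) := by
    nlinarith [mul_exp_neg_le hL, exp_pos (-L)]
  rw [rpow_def_of_pos (by positivity), ← exp_add]
  calc exp (log (2 * L * exp L) * exp (-L) + L * t) ≤ exp (log 2) :=
        exp_le_exp.2 (by linarith [four_mul_exp_neg_two_le])
    _ = 2 := exp_log two_pos

lemma neg_two_mul_log_le_exp_of_half_le {t : ℝ} (ht : 1 / 2 ≤ t) (ht1 : t ≤ 1) :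
    -(2 * log t) ≤ exp (2 * (1 - t)) := by
  have hlog : -log t ≤ 2 * (1 - t) := by
    have h := log_le_sub_one_of_pos (inv_pos.2 (by linarith : (0 : ℝ) < t))
    rw [log_inv] at h
    have : t⁻¹ ≤ 2 := by rw [inv_le_comm₀ (by linarith) two_pos]; linarith
    nlinarith [inv_mul_cancel₀ (by linarith : t ≠ 0)]
  linarith [add_one_le_exp (2 * (1 - t))]

lemma neg_two_mul_log_le_exp_of_mem_Icc {t : ℝ} (ht : 3 / 40 ≤ t) (ht1 : t ≤ 1 / 2) :
    -(2 * log t) ≤ exp (2 * (1 - t)) := by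
  -- `log t` lies above its chord over `[3/40, 1/2]`, and `exp` above its tangent at `3/20`
  have hchord : (20 - 40 * t) / 17 * log (3 / 40) + (40 * t - 3) / 17 * log (1 / 2) ≤ log t := by
    have h := strictConcaveOn_log_Ioi.concaveOn.2 (by norm_num : (3 / 40 : ℝ) ∈ Set.Ioi 0)
      (by norm_num : (1 / 2 : ℝ) ∈ Set.Ioi 0) (by linarith : 0 ≤ (20 - 40 * t) / 17)
      (by linarith : 0 ≤ (40 * t - 3) / 17) (by ring)
    have hmix : (20 - 40 * t) / 17 * (3 / 40) + (40 * t - 3) / 17 * (1 / 2) = t := by ring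
    simpa only [smul_eq_mul, hmix] using h
  rw [one_div, log_inv, show (3 / 40 : ℝ) = (40 / 3)⁻¹ by norm_num, log_inv] at hchord
  have htangent : 27 / 5 * (1 + 2 * (3 / 20 - t)) ≤ exp (2 * (1 - t)) := by
    rw [show 2 * (1 - t) = 17 / 10 + 2 * (3 / 20 - t) by ring, exp_add]
    nlinarith [add_one_le_exp (2 * (3 / 20 - t)), le_exp_seventeen_div_ten,
      exp_pos (2 * (3 / 20 - t))]
  nlinarith [log_forty_div_three_le, log_two_lt_d9]

lemma neg_two_mul_log_le_exp_of_le {L t : ℝ} (ht0 : 0 < t) (ht : t ≤ 3 / 40)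
    (hLt : 3 / 20 ≤ L * t) : -(2 * log t) ≤ exp (L * (1 - t)) := by
  have hL : 2 ≤ L := by nlinarith
  have hlog : -log t ≤ 13 / 5 + (L / 2 - 1) := by
    have h : -log t ≤ log (40 / 3) + log (L / 2) := by
      rw [← log_inv, ← log_mul (by norm_num) (by positivity)]
      refine log_le_log (by positivity) ?_
      rw [inv_le_iff_one_le_mul₀ ht0]
      nlinarith
    linarith [log_forty_div_three_le, log_le_sub_one_of_pos (by positivity : (0 : ℝ) < L / 2)]
  have hexp : 27 / 5 * (1 + (37 * L / 40 - 17 / 10)) ≤ exp (L * (1 - t)) := by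
    have hmono : exp (37 * L / 40) ≤ exp (L * (1 - t)) := exp_le_exp.2 (by nlinarith)
    rw [show 37 * L / 40 = 17 / 10 + (37 * L / 40 - 17 / 10) by ring, exp_add] at hmono
    nlinarith [add_one_le_exp (37 * L / 40 - 17 / 10), le_exp_seventeen_div_ten,
      exp_pos (37 * L / 40 - 17 / 10)]
  linarith

lemma neg_two_mul_log_le_exp {L t : ℝ} (hL : 2 ≤ L) (ht : 0 < t) (hLt : 3 / 20 ≤ L * t) :
    -(2 * log t) ≤ exp (L * (1 - t)) := by
  rcases le_or_gt 1 t with ht1 | ht1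
  · linarith [log_nonneg ht1, exp_pos (L * (1 - t))]
  rcases le_or_gt t (3 / 40) with hsmall | hmid
  · exact neg_two_mul_log_le_exp_of_le ht hsmall hLt
  refine le_trans ?_ (exp_le_exp.2 (mul_le_mul_of_nonneg_right hL (by linarith)))
  rcases le_or_gt t (1 / 2) with hhalf | hhalf
  · exact neg_two_mul_log_le_exp_of_mem_Icc hmid.le hhalf
  · exact neg_two_mul_log_le_exp_of_half_le hhalf.le ht1.le

section dualScaling

variable {H L t : ℝ}

lemma mul_two_mul_mul_exp_mul (hH : 2 * H = exp (-L)) : H * (2 * L * exp L * t) = L * t := by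
  rw [show H * (2 * L * exp L * t) = 2 * H * exp L * (L * t) by ring, hH, ← exp_add,
    neg_add_cancel, exp_zero, one_mul]

lemma one_sub_rpow_le_fbmDualCorr_of_mul_le (hL : 2 ≤ L) (hH : 2 * H = exp (-L)) (ht : 0 ≤ t)
    (hLt : L * t ≤ 3 / 20) : 1 - t ^ (2 * H) ≤ fbmDualCorr H (2 * L * exp L * t) := by
  have hpow := rpow_exp_neg_mul_exp_le_two hL hLt
  rw [← hH] at hpow
  refine le_trans ?_ (one_sub_le_fbmDualCorr (by linarith [exp_pos (-L)]) (by positivity))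
  rw [mul_rpow (by positivity) ht, mul_two_mul_mul_exp_mul hH]
  nlinarith [rpow_nonneg ht (2 * H)]

lemma one_sub_rpow_le_fbmDualCorr_of_le_mul (hL : 2 ≤ L) (hH : 2 * H = exp (-L))
    (hLt : 3 / 20 ≤ L * t) : 1 - t ^ (2 * H) ≤ fbmDualCorr H (2 * L * exp L * t) := by
  have ht0 : 0 < t := by nlinarith
  have hH0 : 0 ≤ H := by linarith [exp_pos (-L)]
  refine le_trans ?_ (exp_neg_div_two_le_fbmDualCorr hH0 (by positivity))
  calc 1 - t ^ (2 * H) ≤ -(2 * H * log t) := one_sub_rpow_le_neg_mul_log ht0 _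
    _ = H * -(2 * log t) := by ring
    _ ≤ H * exp (L * (1 - t)) :=
      mul_le_mul_of_nonneg_left (neg_two_mul_log_le_exp hL ht0 hLt) hH0
    _ = exp (-(H * (2 * L * exp L * t))) / 2 := by
      rw [mul_two_mul_mul_exp_mul hH, show H = exp (-L) / 2 by linarith, div_mul_eq_mul_div,
        ← exp_add]
      ring_nf

theorem max_one_sub_rpow_le_fbmDualCorr (hL : 2 ≤ L) (hH : 2 * H = exp (-L)) (ht : 0 ≤ t) :
    max (1 - t ^ (2 * H)) 0 ≤ fbmDualCorr H (2 * L * exp L * t) := by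
  refine max_le ?_ ((by positivity : (0 : ℝ) ≤ exp (-(H * (2 * L * exp L * t))) / 2).trans
    (exp_neg_div_two_le_fbmDualCorr (by linarith [exp_pos (-L)]) (by positivity)))
  rcases le_total (L * t) (3 / 20) with hLt | hLt
  · exact one_sub_rpow_le_fbmDualCorr_of_mul_le hL hH ht hLt
  · exact one_sub_rpow_le_fbmDualCorr_of_le_mul hL hH hLt

end dualScaling

theorem stmt_6 (H : ℝ) (hH0 : 0 < H) (hH : H ≤ exp (-2) / 2) (p : ℝ)
    (hp : p = log (1 / (2 * H)) / H) (t : ℝ) (ht : 0 ≤ t) :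
    max (1 - t ^ (2 * H)) 0 ≤
      cosh (H * p * t) - (1 / 2) * (2 * sinh (p * t / 2)) ^ (2 * H) := by
  set L := log (1 / (2 * H)) with hL
  have h2H : 2 * H = exp (-L) := by rw [hL, one_div, log_inv, neg_neg, exp_log (by positivity)]
  have hL2 : 2 ≤ L := by
    rw [hL, one_div, log_inv, le_neg, log_le_iff_le_exp (by positivity)]
    linarith
  have hp' : p = 2 * L * exp L := by
    rw [hp, div_eq_iff hH0.ne', show 2 * L * exp L * H = L * (exp L * (2 * H)) by ring, h2H,
      ← exp_add, add_neg_cancel, exp_zero, mul_one]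
  rw [mul_assoc, hp']
  exact max_one_sub_rpow_le_fbmDualCorr hL2 h2H ht
end

section
/- For every real a > 1 and every x with 0 < x < 1: x(1-x) + a x^2 ln x + (1-x)^2 ln(1-x) ≤ 0. -/
/-!
Bounding both logarithms by `log y ≤ y - 1` turns the left-hand side at `a = 1` into
`x(1 - x) - x²(1 - x) - x(1 - x)² = 0`; for `a > 1` the term `a x² log x` is only smaller,
since `log x < 0`.
-/

open Real

theorem mul_one_sub_add_sq_mul_log_add_one_sub_sq_mul_log_nonpos {x : ℝ} (hx0 : 0 < x)
    (hx1 : x < 1) : x * (1 - x) + x ^ 2 * log x + (1 - x) ^ 2 * log (1 - x) ≤ 0 := by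
  have hlog_x : x ^ 2 * log x ≤ x ^ 2 * (x - 1) :=
    mul_le_mul_of_nonneg_left (log_le_sub_one_of_pos hx0) (sq_nonneg x)
  have hlog_one_sub : (1 - x) ^ 2 * log (1 - x) ≤ (1 - x) ^ 2 * (1 - x - 1) :=
    mul_le_mul_of_nonneg_left (log_le_sub_one_of_pos (sub_pos.mpr hx1)) (sq_nonneg _)
  calc x * (1 - x) + x ^ 2 * log x + (1 - x) ^ 2 * log (1 - x)
      ≤ x * (1 - x) + x ^ 2 * (x - 1) + (1 - x) ^ 2 * (1 - x - 1) := by linarith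
    _ = 0 := by ring

theorem stmt_7 (a : ℝ) (ha : 1 < a) (x : ℝ) (hx0 : 0 < x) (hx1 : x < 1) :
    x * (1 - x) + a * x ^ 2 * log x + (1 - x) ^ 2 * log (1 - x) ≤ 0 := by
  have hscale : a * x ^ 2 * log x ≤ x ^ 2 * log x := by
    rw [mul_assoc]
    exact mul_le_of_one_le_left
      (mul_nonpos_of_nonneg_of_nonpos (sq_nonneg x) (log_neg hx0 hx1).le) ha.le
  linarith [mul_one_sub_add_sq_mul_log_add_one_sub_sq_mul_log_nonpos hx0 hx1]
end

section
/- For every x with 0 < x < 1: (1-x)(3-x) x^2 ln(1/x) + (1-x)^2 * ( x + (1-x)^2 ln(1-x) ) ≥ 0. -/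
/-!
The first summand is a product of nonnegative factors. For the second, multiplying
`1 - (1 - x)⁻¹ ≤ log (1 - x)` by `1 - x` gives `x + (1 - x) log (1 - x) ≥ 0`, and since
`log (1 - x) ≤ 0` the weight `1 - x` may be lowered to `(1 - x) ^ 2`.
-/

open Real

lemma add_one_sub_mul_log_one_sub_nonneg {x : ℝ} (hx : x < 1) :
    0 ≤ x + (1 - x) * log (1 - x) := by
  have hpos : 0 < 1 - x := sub_pos.2 hx
  have : -x ≤ (1 - x) * log (1 - x) :=
    calc -x = (1 - x) * (1 - (1 - x)⁻¹) := by field_simp; ring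
      _ ≤ (1 - x) * log (1 - x) :=
        mul_le_mul_of_nonneg_left (one_sub_inv_le_log_of_pos hpos) hpos.le
  linarith

lemma add_one_sub_sq_mul_log_one_sub_nonneg {x : ℝ} (hx0 : 0 ≤ x) (hx1 : x < 1) :
    0 ≤ x + (1 - x) ^ 2 * log (1 - x) := by
  have hlog : log (1 - x) ≤ 0 := log_nonpos (by linarith) (by linarith)
  have hsq : (1 - x) ^ 2 ≤ 1 - x := by nlinarith
  have : (1 - x) * log (1 - x) ≤ (1 - x) ^ 2 * log (1 - x) :=
    mul_le_mul_of_nonpos_right hsq hlog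
  linarith [add_one_sub_mul_log_one_sub_nonneg hx1]

theorem stmt_9 (x : ℝ) (hx0 : 0 < x) (hx1 : x < 1) :
    0 ≤ (1 - x) * (3 - x) * x ^ 2 * log (1 / x)
        + (1 - x) ^ 2 * (x + (1 - x) ^ 2 * log (1 - x)) := by
  have hlog : 0 ≤ log (1 / x) := log_nonneg (one_le_one_div hx0 hx1.le)
  have hfirst : 0 ≤ (1 - x) * (3 - x) * x ^ 2 * log (1 / x) := by
    have : 0 ≤ 1 - x := by linarith
    have : 0 ≤ 3 - x := by linarith
    positivity
  exact add_nonneg hfirst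
    (mul_nonneg (sq_nonneg _) (add_one_sub_sq_mul_log_one_sub_nonneg hx0.le hx1))
end

section
/- For every H with 0 < H ≤ 1/2 and every t ≥ 0: (cosh t)^{2H} - (sinh t)^{2H} ≥ max(1 - t^{2H}, 0). -/
/-! From `tanh t ≤ t` we get `sinh t ^ p ≤ t ^ p * cosh t ^ p`, hence
`cosh t ^ p - sinh t ^ p ≥ cosh t ^ p * (1 - t ^ p) ≥ 1 - t ^ p` whenever `t ^ p ≤ 1`;
otherwise `1 - t ^ p < 0 ≤ cosh t ^ p - sinh t ^ p` because `sinh < cosh`. -/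

open Real

lemma sinh_le_mul_cosh {x : ℝ} (hx : 0 ≤ x) : sinh x ≤ x * cosh x := by
  let g : ℝ → ℝ := fun y ↦ y * cosh y - sinh y
  have hg : ∀ y, HasDerivAt g (y * sinh y) y := fun y ↦
    (((hasDerivAt_id' y).mul (hasDerivAt_cosh y)).sub (hasDerivAt_sinh y)).congr_deriv (by ring)
  have hmono : MonotoneOn g (Set.Ici 0) :=
    monotoneOn_of_hasDerivWithinAt_nonneg (convex_Ici 0)
      (fun y _ ↦ (hg y).continuousAt.continuousWithinAt)
      (fun y _ ↦ (hg y).hasDerivWithinAt)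
      (fun y hy ↦ by
        rw [interior_Ici] at hy
        exact mul_nonneg hy.le (sinh_nonneg_iff.2 hy.le))
  have := hmono Set.self_mem_Ici hx hx
  simp only [g, zero_mul, sinh_zero, sub_zero] at this
  linarith

lemma max_one_sub_rpow_zero_le_cosh_rpow_sub_sinh_rpow {p t : ℝ} (hp : 0 ≤ p) (ht : 0 ≤ t) :
    max (1 - t ^ p) 0 ≤ cosh t ^ p - sinh t ^ p := by
  have hsinh_nonneg : 0 ≤ sinh t := sinh_nonneg_iff.2 ht
  have hsinh_le_cosh : sinh t ^ p ≤ cosh t ^ p :=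
    rpow_le_rpow hsinh_nonneg (sinh_lt_cosh t).le hp
  have hsinh : sinh t ^ p ≤ t ^ p * cosh t ^ p := by
    rw [← mul_rpow ht (cosh_pos t).le]
    exact rpow_le_rpow hsinh_nonneg (sinh_le_mul_cosh ht) hp
  have hcosh : 1 ≤ cosh t ^ p := one_le_rpow (one_le_cosh t) hp
  refine max_le ?_ (sub_nonneg.2 hsinh_le_cosh)
  rcases le_total (t ^ p) 1 with h | h
  · nlinarith
  · linarith

theorem stmt_10_general (H : ℝ) (hH0 : 0 < H) (t : ℝ) (ht : 0 ≤ t) :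
    max (1 - t ^ (2 * H)) 0 ≤ (cosh t) ^ (2 * H) - (sinh t) ^ (2 * H) :=
  max_one_sub_rpow_zero_le_cosh_rpow_sub_sinh_rpow (by positivity) ht

theorem stmt_10 (H : ℝ) (hH0 : 0 < H) (hH : H ≤ 1 / 2) (t : ℝ) (ht : 0 ≤ t) :
    max (1 - t ^ (2 * H)) 0 ≤ (cosh t) ^ (2 * H) - (sinh t) ^ (2 * H) :=
  stmt_10_general H hH0 t ht
end

section
/- For every H with 0 < H < 1 and every s ≥ 0, B_H(s) ≥ 0; that is, (2+2H)(exp(Hs) + exp(-Hs)) - exp((1+H)s) - exp(-(1+H)s) + (exp(s/2) - exp(-s/2))^{2H+2} ≥ 0. -/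
/-!
Put `p = 2H + 2 ≥ 1` and `u = s / 2 ≥ 0`. Factoring `e^u - e^{-u} = e^u (1 - e^{-2u})` and applying
Bernoulli's inequality `(1 - t)^p ≥ 1 - p t` gives `(e^u - e^{-u})^p ≥ e^{(1+H)s} - p e^{Hs}`, while
`e^{-(1+H)s} ≤ e^{-Hs} ≤ p e^{-Hs}`. Adding the two bounds leaves `0 ≤ B_H(s)`.
-/

open Real

theorem one_sub_mul_le_rpow_one_sub {t p : ℝ} (ht : t ≤ 1) (hp : 1 ≤ p) :
    1 - p * t ≤ (1 - t) ^ p := by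
  simpa [sub_eq_add_neg] using one_add_mul_self_le_rpow_one_add (s := -t) (by linarith) hp

theorem exp_mul_sub_mul_exp_le_rpow_exp_sub_exp_neg {u p : ℝ} (hu : 0 ≤ u) (hp : 1 ≤ p) :
    exp (p * u) - p * exp ((p - 2) * u) ≤ (exp u - exp (-u)) ^ p := by
  have hfactor : exp u - exp (-u) = exp u * (1 - exp (-(2 * u))) := by
    rw [mul_sub, mul_one, ← exp_add]; ring_nf
  have hsmall : exp (-(2 * u)) ≤ 1 := exp_le_one_iff.mpr (by linarith)
  calc exp (p * u) - p * exp ((p - 2) * u)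
      = exp u ^ p * (1 - p * exp (-(2 * u))) := by
        rw [← exp_mul, mul_sub, mul_one, mul_left_comm, ← exp_add]; ring_nf
    _ ≤ exp u ^ p * (1 - exp (-(2 * u))) ^ p :=
        mul_le_mul_of_nonneg_left (one_sub_mul_le_rpow_one_sub hsmall hp) (by positivity)
    _ = (exp u - exp (-u)) ^ p := by
        rw [hfactor, mul_rpow (exp_pos u).le (by linarith)]

theorem exp_neg_mul_le_mul_exp_neg {u p : ℝ} (hu : 0 ≤ u) (hp : 1 ≤ p) :
    exp (-(p * u)) ≤ p * exp (-((p - 2) * u)) :=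
  calc exp (-(p * u)) ≤ exp (-((p - 2) * u)) := exp_le_exp.mpr (by nlinarith)
    _ ≤ p * exp (-((p - 2) * u)) := le_mul_of_one_le_left (exp_pos _).le hp

theorem stmt_11_general (H : ℝ) (hH0 : 0 < H) (s : ℝ) (hs : 0 ≤ s) :
    0 ≤ (2 + 2 * H) * (exp (H * s) + exp (-(H * s))) - exp ((1 + H) * s)
        - exp (-((1 + H) * s)) + (exp (s / 2) - exp (-(s / 2))) ^ (2 * H + 2) := by
  have hu : 0 ≤ s / 2 := by linarith
  have hp : 1 ≤ 2 * H + 2 := by linarith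
  have hpu : (2 * H + 2) * (s / 2) = (1 + H) * s := by ring
  have hpu' : (2 * H + 2 - 2) * (s / 2) = H * s := by ring
  have hpos := exp_mul_sub_mul_exp_le_rpow_exp_sub_exp_neg hu hp
  have hneg := exp_neg_mul_le_mul_exp_neg hu hp
  rw [hpu, hpu'] at hpos hneg
  linarith

theorem stmt_11 (H : ℝ) (hH0 : 0 < H) (hH1 : H < 1) (s : ℝ) (hs : 0 ≤ s) :
    0 ≤ (2 + 2 * H) * (exp (H * s) + exp (-(H * s))) - exp ((1 + H) * s)
        - exp (-((1 + H) * s)) + (exp (s / 2) - exp (-(s / 2))) ^ (2 * H + 2) :=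
  stmt_11_general H hH0 s hs
end

section
/- For every H with 0 < H < 1: the limit as t → 0+ of ( B_H(t) - 1 + (1 - H^2) t^2 / 2 ) / t^{2+2H} equals 1/(2+4H). -/
open Real Filter Topology

lemma abs_cosh_sub_one_sub_sq_div_two_le {x : ℝ} (hx : |x| ≤ 1) :
    |cosh x - 1 - x ^ 2 / 2| ≤ x ^ 4 / 16 := by
  have taylor (y : ℝ) (hy : |y| ≤ 1) :
      |exp y - (1 + y + y ^ 2 / 2 + y ^ 3 / 6)| ≤ |y| ^ 4 * (5 / 96) := by
    have h := Real.exp_bound hy (by norm_num : 0 < 4)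
    norm_num [Finset.sum_range_succ, Nat.factorial] at h
    convert h using 2
  have hpos := taylor x hx
  have hneg := taylor (-x) (by rwa [abs_neg])
  rw [abs_neg] at hneg
  have hx4 : |x| ^ 4 = x ^ 4 := by rw [pow_abs, abs_of_nonneg (by positivity)]
  rw [hx4, abs_le] at hpos hneg
  rw [cosh_eq, abs_le]
  constructor <;> nlinarith [pow_two_nonneg (x ^ 2)]

noncomputable def coshPartRemainder (H t : ℝ) : ℝ :=
  4 * (1 + H) * cosh (H * t) - 2 * cosh ((1 + H) * t)
    - (2 + 4 * H) * (1 - (1 - H ^ 2) * t ^ 2 / 2)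

lemma dualCorrIFBM_sub_taylor {H : ℝ} (hH : 2 + 4 * H ≠ 0) (t : ℝ) :
    dualCorrIFBM H t - 1 + (1 - H ^ 2) * t ^ 2 / 2
      = (2 + 4 * H)⁻¹ * (coshPartRemainder H t + (2 * sinh (t / 2)) ^ (2 * H + 2)) := by
  rw [sinh_eq, mul_div_cancel₀ _ two_ne_zero, dualCorrIFBM, coshPartRemainder, cosh_eq, cosh_eq]
  field_simp
  ring

lemma abs_coshPartRemainder_le {H t : ℝ} (hH0 : 0 ≤ H) (hH1 : H ≤ 1) (ht : |t| ≤ 1 / 2) :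
    |coshPartRemainder H t| ≤ 3 * t ^ 4 := by
  have hH : |H * t| ≤ 1 := by
    rw [abs_mul, abs_of_nonneg hH0]; nlinarith [abs_nonneg t]
  have h1H : |(1 + H) * t| ≤ 1 := by
    rw [abs_mul, abs_of_nonneg (by linarith)]; nlinarith [abs_nonneg t]
  have hsplit : coshPartRemainder H t
      = 4 * (1 + H) * (cosh (H * t) - 1 - (H * t) ^ 2 / 2)
        - 2 * (cosh ((1 + H) * t) - 1 - ((1 + H) * t) ^ 2 / 2) := by
    rw [coshPartRemainder]; ring
  have hHt4 : (H * t) ^ 4 ≤ t ^ 4 := by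
    rw [mul_pow]; nlinarith [pow_le_one₀ hH0 hH1 (n := 4), pow_two_nonneg (t ^ 2)]
  have h1Ht4 : ((1 + H) * t) ^ 4 ≤ 16 * t ^ 4 := by
    rw [mul_pow]
    have : (1 + H) ^ 4 ≤ 2 ^ 4 := pow_le_pow_left₀ (by linarith) (by linarith) 4
    nlinarith [pow_two_nonneg (t ^ 2)]
  calc |coshPartRemainder H t|
      ≤ 4 * (1 + H) * |cosh (H * t) - 1 - (H * t) ^ 2 / 2|
        + 2 * |cosh ((1 + H) * t) - 1 - ((1 + H) * t) ^ 2 / 2| := by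
        rw [hsplit]
        refine (abs_sub _ _).trans (le_of_eq ?_)
        rw [abs_mul, abs_mul, abs_mul, abs_of_nonneg (by norm_num : (0 : ℝ) ≤ 4),
          abs_of_nonneg (by linarith : 0 ≤ 1 + H), abs_two]
    _ ≤ 4 * 2 * (t ^ 4 / 16) + 2 * (16 * t ^ 4 / 16) := by
        gcongr
        · linarith
        · exact (abs_cosh_sub_one_sub_sq_div_two_le hH).trans (by linarith)
        · exact (abs_cosh_sub_one_sub_sq_div_two_le h1H).trans (by linarith)
    _ ≤ 3 * t ^ 4 := by nlinarith [pow_two_nonneg (t ^ 2)]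

lemma tendsto_div_rpow_of_abs_le_pow {f : ℝ → ℝ} {C p : ℝ} {n : ℕ} (hp : p < n)
    (hf : ∀ᶠ t in 𝓝[>] 0, |f t| ≤ C * t ^ n) :
    Tendsto (fun t ↦ f t / t ^ p) (𝓝[>] 0) (𝓝 0) := by
  have hpow : Tendsto (fun t : ℝ ↦ t ^ ((n : ℝ) - p)) (𝓝[>] 0) (𝓝 0) := by
    simpa [zero_rpow (sub_pos.2 hp).ne'] using
      (continuousAt_rpow_const 0 _ (Or.inr (sub_pos.2 hp).le)).tendsto.mono_left nhdsWithin_le_nhds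
  refine squeeze_zero_norm' ?_ (by simpa using hpow.const_mul C)
  filter_upwards [hf, self_mem_nhdsWithin] with t hft (ht : 0 < t)
  rw [norm_div, norm_eq_abs, norm_of_nonneg (rpow_nonneg ht.le p), rpow_sub ht,
    rpow_natCast, ← mul_div_assoc]
  exact div_le_div_of_nonneg_right hft (rpow_nonneg ht.le p)

lemma tendsto_two_mul_sinh_half_div : Tendsto (fun t ↦ 2 * sinh (t / 2) / t) (𝓝[>] 0) (𝓝 1) := by
  have hderiv : HasDerivAt (fun t ↦ 2 * sinh (t / 2)) 1 0 := by
    simpa using (((hasDerivAt_id (0 : ℝ)).div_const 2).sinh).const_mul 2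
  simpa [div_eq_inv_mul] using hderiv.tendsto_slope_zero_right

lemma tendsto_two_mul_sinh_half_rpow_div (p : ℝ) :
    Tendsto (fun t ↦ (2 * sinh (t / 2)) ^ p / t ^ p) (𝓝[>] 0) (𝓝 1) := by
  have := ((continuousAt_rpow_const 1 p (Or.inl one_ne_zero)).tendsto.comp
    tendsto_two_mul_sinh_half_div)
  rw [one_rpow] at this
  refine this.congr' ?_
  filter_upwards [self_mem_nhdsWithin] with t (ht : 0 < t)
  exact div_rpow (mul_nonneg zero_le_two (sinh_nonneg_iff.2 (half_pos ht).le)) ht.le p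

theorem stmt_12 (H : ℝ) (hH0 : 0 < H) (hH1 : H < 1) :
    Tendsto (fun t : ℝ =>
        (dualCorrIFBM H t - 1 + (1 - H ^ 2) * t ^ 2 / 2) / t ^ (2 + 2 * H))
      (𝓝[>] 0) (𝓝 (1 / (2 + 4 * H))) := by
  have hH : 2 + 4 * H ≠ 0 := by positivity
  have hremainder : Tendsto (fun t ↦ coshPartRemainder H t / t ^ (2 + 2 * H)) (𝓝[>] 0) (𝓝 0) := by
    refine tendsto_div_rpow_of_abs_le_pow (C := 3) (n := 4) (by push_cast; linarith) ?_
    filter_upwards [Ioo_mem_nhdsGT (by norm_num : (0 : ℝ) < 1 / 2)] with t ht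
    exact abs_coshPartRemainder_le hH0.le hH1.le (abs_le.2 ⟨by linarith [ht.1], ht.2.le⟩)
  have hlim := (hremainder.add (tendsto_two_mul_sinh_half_rpow_div (2 + 2 * H))).const_mul
    (2 + 4 * H)⁻¹
  rw [zero_add, mul_one] at hlim
  rw [one_div]
  refine hlim.congr fun t ↦ ?_
  rw [dualCorrIFBM_sub_taylor hH, add_comm (2 * H), mul_div_assoc, add_div]
end

section
/- For every H with 0 < H < 1/2: the limit as t → ∞ of exp(Ht) * B_H(t) equals (1+H)/(1+2H). -/
/-!
Put `x = e^{-t}`. Then `e^{Ht} B_H(t) = ((2 + 2H) - x + ψ(x) x^{-(1+2H)}) / (2 + 4H)` with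
`ψ(x) = (1 - x)^{2H+2} - 1 + (2H+2) x`, the second-order remainder of the binomial series, so
`ψ(x) = O(x²)`. Since `1 + 2H < 2`, the last term vanishes as `x → 0⁺`.
-/

open Real Filter Topology

open Asymptotics

theorem isBigO_one_add_rpow_sub_one_sub_mul (a : ℝ) :
    (fun y : ℝ => (1 + y) ^ a - 1 - a * y) =O[𝓝 0] fun y => y ^ 2 := by
  have h := (one_add_rpow_hasFPowerSeriesAt_zero (a := a)).isBigO_sub_partialSum_pow 2
  simpa [FormalMultilinearSeries.partialSum, Finset.sum_range_succ, binomialSeries,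
    sub_sub, mul_comm] using h

theorem tendsto_one_sub_rpow_sub_one_add_mul_mul_rpow_neg (p : ℝ) {q : ℝ} (hq : q < 2) :
    Tendsto (fun x : ℝ => ((1 - x) ^ p - 1 + p * x) * x ^ (-q)) (𝓝[>] 0) (𝓝 0) := by
  have hψ : (fun x : ℝ => (1 - x) ^ p - 1 + p * x) =O[𝓝[>] 0] fun x => x ^ 2 := by
    have := (isBigO_one_add_rpow_sub_one_sub_mul p).comp_tendsto
      ((continuous_neg.tendsto' (0 : ℝ) 0 neg_zero).mono_left (nhdsWithin_le_nhds (s := Set.Ioi 0)))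
    simpa [Function.comp_def, sub_eq_add_neg] using this
  have hpow : (fun x : ℝ => x ^ 2 * x ^ (-q)) =ᶠ[𝓝[>] 0] fun x => x ^ (2 - q) := by
    filter_upwards [self_mem_nhdsWithin] with x (hx : 0 < x)
    rw [← rpow_natCast, ← rpow_add hx]
    norm_num [sub_eq_add_neg]
  refine ((hψ.mul (isBigO_refl _ _)).trans hpow.isBigO).trans_tendsto ?_
  have h := (continuousAt_rpow_const 0 (2 - q) (Or.inr (by linarith))).tendsto
  rw [zero_rpow (by linarith)] at h
  exact h.mono_left nhdsWithin_le_nhds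

theorem exp_mul_dualCorrIFBM_eq (H : ℝ) {t : ℝ} (ht : 0 ≤ t) :
    exp (H * t) * dualCorrIFBM H t = (2 + 4 * H)⁻¹ * (2 + 2 * H - exp (-t) +
      ((1 - exp (-t)) ^ (2 * H + 2) - 1 + (2 * H + 2) * exp (-t)) *
        exp (-t) ^ (-(1 + 2 * H))) := by
  have hsinh : exp (t / 2) - exp (-(t / 2)) = exp (t / 2) * (1 - exp (-t)) := by
    rw [mul_sub, mul_one, ← exp_add]
    ring_nf
  have hpow : (exp (t / 2) * (1 - exp (-t))) ^ (2 * H + 2)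
      = exp ((1 + H) * t) * (1 - exp (-t)) ^ (2 * H + 2) := by
    rw [mul_rpow (exp_pos _).le (by simp [ht]), ← exp_mul]
    ring_nf
  have hinv : exp (-t) ^ (-(1 + 2 * H)) = exp t * exp (H * t) ^ 2 := by
    rw [← exp_mul, sq, ← exp_add, ← exp_add]
    ring_nf
  have hsplit : exp ((1 + H) * t) = exp t * exp (H * t) := by
    rw [← exp_add]
    ring_nf
  rw [dualCorrIFBM, hsinh, hpow, hinv]
  simp only [hsplit, exp_neg]
  field_simp
  ring

theorem stmt_13_general (H : ℝ) (hH1 : H < 1 / 2) :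
    Tendsto (fun t : ℝ => exp (H * t) * dualCorrIFBM H t) atTop
      (𝓝 ((1 + H) / (1 + 2 * H))) := by
  have hx : Tendsto (fun t : ℝ => exp (-t)) atTop (𝓝[>] 0) :=
    tendsto_nhdsWithin_of_tendsto_nhds_of_eventually_within _
      tendsto_exp_neg_atTop_nhds_zero (Eventually.of_forall fun t => exp_pos _)
  have hlim : Tendsto (fun x : ℝ => (2 + 4 * H)⁻¹ * (2 + 2 * H - x +
      ((1 - x) ^ (2 * H + 2) - 1 + (2 * H + 2) * x) * x ^ (-(1 + 2 * H))))
      (𝓝[>] 0) (𝓝 ((2 + 4 * H)⁻¹ * (2 + 2 * H - 0 + 0))) :=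
    tendsto_const_nhds.mul ((tendsto_const_nhds.sub
      (tendsto_nhdsWithin_of_tendsto_nhds tendsto_id)).add (tendsto_one_sub_rpow_sub_one_add_mul_mul_rpow_neg _ (by linarith)))
  have hvalue : (2 + 4 * H)⁻¹ * (2 + 2 * H - 0 + 0) = (1 + H) / (1 + 2 * H) := by
    rw [div_eq_mul_inv, show 2 + 4 * H = 2 * (1 + 2 * H) by ring, mul_inv]
    ring
  rw [← hvalue]
  refine (hlim.comp hx).congr' ?_
  filter_upwards [eventually_ge_atTop 0] with t ht
  exact (exp_mul_dualCorrIFBM_eq H ht).symm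

theorem stmt_13 (H : ℝ) (hH0 : 0 < H) (hH1 : H < 1 / 2) :
    Tendsto (fun t : ℝ => exp (H * t) * dualCorrIFBM H t) atTop
      (𝓝 ((1 + H) / (1 + 2 * H))) :=
  stmt_13_general H hH1
end

section
/- Let 0 < H < 1/2 and define g(t) = 1 - (t^{1+2H} + (1-t)^{1+2H})/(1+2H) for t ∈ [0,1]. Then for all t ∈ [0,1]: g(0) ≤ g(t) ≤ g(1/2), and moreover H < g(t) < 2H * ln(2e). -/
/-!
Write `p = 1 + 2H`. On `[0, 1]` the function `t ↦ t ^ p + (1 - t) ^ p` is largest at the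
endpoints (superadditivity of `x ↦ x ^ p`) and smallest at `t = 1/2` (convexity), which gives
`g 0 ≤ g t ≤ g (1/2)`. Then `H < g 0 = 2H / p` because `p < 2`, and
`g (1/2) = 1 - 2 ^ (-2H) / p ≤ 2H (1 + log 2) / p < 2H log (2e)` by `e ^ x ≥ 1 + x`.
-/

open Real

lemma rpow_add_rpow_one_sub_le_one {p t : ℝ} (hp : 1 ≤ p) (ht0 : 0 ≤ t) (ht1 : t ≤ 1) :
    t ^ p + (1 - t) ^ p ≤ 1 := by
  simpa using add_rpow_le_rpow_add ht0 (sub_nonneg.2 ht1) hp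

lemma rpow_add_div_two_le {p a b : ℝ} (hp : 1 ≤ p) (ha : 0 ≤ a) (hb : 0 ≤ b) :
    ((a + b) / 2) ^ p ≤ (a ^ p + b ^ p) / 2 := by
  have h := (convexOn_rpow hp).2 (Set.mem_Ici.2 ha) (Set.mem_Ici.2 hb)
    (by norm_num : (0 : ℝ) ≤ 1 / 2) (by norm_num : (0 : ℝ) ≤ 1 / 2) (by norm_num)
  simp only [smul_eq_mul] at h
  rw [show (a + b) / 2 = 1 / 2 * a + 1 / 2 * b by ring]
  linarith

lemma one_add_mul_log_le_rpow {x : ℝ} (hx : 0 < x) (y : ℝ) : 1 + y * log x ≤ x ^ y := by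
  rw [rpow_def_of_pos hx, mul_comm]
  linarith [add_one_le_exp (log x * y)]

lemma one_sub_half_rpow_div_lt {H : ℝ} (hH : 0 < H) :
    1 - (1 / 2) ^ (2 * H) / (1 + 2 * H) < 2 * H * log (2 * exp 1) := by
  have hexp := one_add_mul_log_le_rpow (by norm_num : (0 : ℝ) < 1 / 2) (2 * H)
  rw [one_div, log_inv, ← one_div] at hexp
  have hlog2 : 0 < log 2 := log_pos one_lt_two
  rw [log_mul two_ne_zero (exp_ne_zero 1), log_exp]
  calc 1 - (1 / 2) ^ (2 * H) / (1 + 2 * H) ≤ 1 - (1 - 2 * H * log 2) / (1 + 2 * H) := by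
        gcongr; linarith
    _ = 2 * H * (log 2 + 1) / (1 + 2 * H) := by field_simp; ring
    _ < 2 * H * (log 2 + 1) := div_lt_self (by positivity) (by linarith)

theorem stmt_14 (H : ℝ) (hH0 : 0 < H) (hH1 : H < 1 / 2)
    (g : ℝ → ℝ)
    (hg : ∀ t, g t = 1 - (t ^ (1 + 2 * H) + (1 - t) ^ (1 + 2 * H)) / (1 + 2 * H))
    (t : ℝ) (ht : t ∈ Set.Icc (0 : ℝ) 1) :
    (g 0 ≤ g t ∧ g t ≤ g (1 / 2)) ∧ (H < g t ∧ g t < 2 * H * log (2 * exp 1)) := by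
  obtain ⟨ht0, ht1⟩ := ht
  have hp1 : 1 ≤ 1 + 2 * H := by linarith
  have hp0 : 0 < 1 + 2 * H := by linarith
  have hmin : g 0 ≤ g t := by
    rw [hg 0, hg t]
    gcongr 1 - ?_ / _
    simpa [zero_rpow hp0.ne'] using rpow_add_rpow_one_sub_le_one hp1 ht0 ht1
  have hmax : g t ≤ g (1 / 2) := by
    rw [hg t, hg (1 / 2)]
    gcongr 1 - ?_ / _
    have hmid := rpow_add_div_two_le hp1 ht0 (sub_nonneg.2 ht1)
    rw [add_sub_cancel] at hmid
    rw [show (1 : ℝ) - 1 / 2 = 1 / 2 by norm_num]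
    linarith
  have hlower : H < g 0 := by
    rw [hg, sub_zero, zero_rpow hp0.ne', one_rpow, zero_add, one_sub_div hp0.ne',
      lt_div_iff₀ hp0]
    nlinarith
  have hupper : g (1 / 2) < 2 * H * log (2 * exp 1) := by
    rw [hg, show (1 : ℝ) - 1 / 2 = 1 / 2 by norm_num, rpow_add (by norm_num), rpow_one]
    convert one_sub_half_rpow_div_lt hH0 using 3
    ring
  exact ⟨⟨hmin, hmax⟩, hlower.trans_le hmin, hmax.trans_lt hupper⟩
end

section
/- For every α with 0 < α < 1 and every t with α ≤ t ≤ 1: α^{1-t} ≤ t^{1-α}. -/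
open Real

/- Write `1 - t = l (1 - α)` with `l ∈ [0, 1]`. By concavity of `x ↦ x ^ l` (Bernoulli's inequality),
`α ^ l ≤ 1 - l (1 - α) = t`, and raising both sides to the power `1 - α ≥ 0` gives the claim. -/

lemma rpow_le_one_sub_mul_one_sub {a l : ℝ} (ha : 0 ≤ a) (hl0 : 0 ≤ l) (hl1 : l ≤ 1) :
    a ^ l ≤ 1 - l * (1 - a) := by
  have h := rpow_one_add_le_one_add_mul_self (s := a - 1) (by linarith) hl0 hl1
  rw [add_sub_cancel] at h
  linarith

theorem stmt_15 (α : ℝ) (hα0 : 0 < α) (hα1 : α < 1) (t : ℝ) (ht0 : α ≤ t) (ht1 : t ≤ 1) :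
    α ^ (1 - t) ≤ t ^ (1 - α) := by
  have h1α : 0 < 1 - α := by linarith
  set l := (1 - t) / (1 - α)
  have hl_mul : l * (1 - α) = 1 - t := div_mul_cancel₀ _ h1α.ne'
  have hl0 : 0 ≤ l := div_nonneg (by linarith) h1α.le
  have hl1 : l ≤ 1 := (div_le_one h1α).2 (by linarith)
  have hαl : α ^ l ≤ t := by
    have := rpow_le_one_sub_mul_one_sub hα0.le hl0 hl1
    linarith
  calc α ^ (1 - t) = (α ^ l) ^ (1 - α) := by rw [← rpow_mul hα0.le, hl_mul]
    _ ≤ t ^ (1 - α) := rpow_le_rpow (rpow_nonneg hα0.le l) hαl h1α.le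
end

section
/- For every α with 0 < α ≤ exp(-2) and every t with α ≤ t ≤ 1: (1/2) α^t + t^α - 1 ≥ α/2. -/
open Real Set

/-! The derivative of `φ t = α ^ t / 2 + t ^ α - 1` is `α ^ t log α / 2 + α t ^ (α - 1)`. Taking
logarithms, `α t ^ (α - 1) ≤ α ^ t` is the chord inequality `(1 - t) log α ≤ (1 - α) log t` for
the concave function `log` on `[α, 1]`, and `α ≤ exp (-2)` means `-log α / 2 ≥ 1`; hence
`φ' ≤ 0` on `(α, 1)` and `φ t ≥ φ 1 = α / 2`. -/

theorem one_sub_mul_log_le_one_sub_mul_log {a t : ℝ} (ha : 0 < a) (hat : a < t) (ht : t < 1) :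
    (1 - t) * log a ≤ (1 - a) * log t := by
  have hslope := strictConcaveOn_log_Ioi.concaveOn.slope_anti_adjacent
    (mem_Ioi.2 ha) (mem_Ioi.2 one_pos) hat ht
  rw [log_one, div_le_div_iff₀ (by linarith) (by linarith)] at hslope
  nlinarith

theorem mul_rpow_sub_one_le_rpow {a t : ℝ} (ha : 0 < a) (hat : a < t) (ht : t < 1) :
    a * t ^ (a - 1) ≤ a ^ t := by
  have ht0 : 0 < t := ha.trans hat
  rw [← log_le_log_iff (by positivity) (by positivity), log_mul ha.ne' (by positivity),
    log_rpow ht0, log_rpow ha]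
  linarith [one_sub_mul_log_le_one_sub_mul_log ha hat ht]

theorem antitoneOn_half_rpow_add_rpow_sub_one {a : ℝ} (ha : 0 < a) (ha2 : a ≤ exp (-2)) :
    AntitoneOn (fun t => 1 / 2 * a ^ t + t ^ a - 1) (Icc a 1) := by
  have hlog : log a ≤ -2 := by simpa using log_le_log ha ha2
  refine antitoneOn_of_hasDerivWithinAt_nonpos (convex_Icc a 1)
    (f' := fun t => 1 / 2 * (a ^ t * log a) + a * t ^ (a - 1)) ?_ (fun t ht => ?_) (fun t ht => ?_)
  · refine ContinuousOn.sub (ContinuousOn.add ?_ ?_) continuousOn_const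
    · exact (continuous_const.mul (continuous_const_rpow ha.ne')).continuousOn
    · exact continuousOn_id.rpow_const fun _ _ => Or.inr ha.le
  · rw [interior_Icc] at ht
    exact ((((hasStrictDerivAt_const_rpow ha t).hasDerivAt.const_mul _).add
      (hasDerivAt_rpow_const (Or.inl (ha.trans ht.1).ne'))).sub_const 1).hasDerivWithinAt
  · rw [interior_Icc] at ht
    have hpow := mul_rpow_sub_one_le_rpow ha ht.1 ht.2
    have hlog_pow := mul_le_mul_of_nonneg_left hlog (rpow_pos_of_pos ha t).le
    linarith

theorem stmt_16 (α : ℝ) (hα0 : 0 < α) (hα1 : α ≤ exp (-2)) (t : ℝ)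
    (ht0 : α ≤ t) (ht1 : t ≤ 1) :
    α / 2 ≤ (1 / 2) * α ^ t + t ^ α - 1 := by
  have hα_le_one : α ≤ 1 := hα1.trans (exp_le_one_iff.2 (by norm_num))
  have := antitoneOn_half_rpow_add_rpow_sub_one hα0 hα1 ⟨ht0, ht1⟩ ⟨hα_le_one, le_rfl⟩ ht1
  simp only [rpow_one, one_rpow] at this
  linarith
end

section
/- The function Q(x) = (3 - x^2)(1 + x^{2√3}) - 4 x^{√3 - 1} is convex on (0,1), i.e., Q''(x) ≥ 0 for all x ∈ (0,1). -/
/-!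
With `s = √3`, multiplying `Q''(x)` by `x ^ (3 - s)` gives
`x ^ (s + 1) * (6s(2s - 1) - (2s + 2)(2s + 1) x²) - 2 x ^ (3 - s) - 4(s - 1)(s - 2)`.
On `(0, 1]` the bracket is nonnegative, so replacing `x ^ (s + 1)` by `x³` and `x ^ (3 - s)` by `x`
only decreases this. The resulting quintic vanishes at `x = 1` because `s² = 3`, and its cofactor
of `1 - x` is positive on `[0, 1]`.
-/

open Real Set

noncomputable def Q (p x : ℝ) : ℝ := (3 - x ^ 2) * (1 + x ^ (2 * p)) - 4 * x ^ (p - 1)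

noncomputable def Q' (p x : ℝ) : ℝ :=
  6 * p * x ^ (2 * p - 1) - 2 * x - (2 * p + 2) * x ^ (2 * p + 1) - 4 * (p - 1) * x ^ (p - 2)

noncomputable def Q'' (p x : ℝ) : ℝ :=
  6 * p * (2 * p - 1) * x ^ (2 * p - 2) - 2 - (2 * p + 2) * (2 * p + 1) * x ^ (2 * p)
    - 4 * (p - 1) * (p - 2) * x ^ (p - 3)

variable {p x : ℝ}

lemma hasDerivAt_Q (hx : x ≠ 0) : HasDerivAt (Q p) (Q' p x) x := by
  have h := (((hasDerivAt_pow 2 x).const_sub 3).mul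
    ((hasDerivAt_rpow_const (p := 2 * p) (Or.inl hx)).const_add 1)).sub
    ((hasDerivAt_rpow_const (p := p - 1) (Or.inl hx)).const_mul 4)
  refine h.congr_deriv ?_
  have e₁ : x ^ (2 * p + 1) = x ^ (2 * p) * x := rpow_add_one hx _
  have e₂ : x ^ (2 * p + 1) = x ^ (2 * p - 1) * x ^ 2 := by
    rw [← rpow_add_natCast hx]; ring_nf
  rw [show p - 1 - 1 = p - 2 by ring, Q']
  linear_combination 2 * e₁ + 2 * p * e₂

lemma hasDerivAt_Q' (hx : x ≠ 0) : HasDerivAt (Q' p) (Q'' p x) x := by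
  have h := ((((hasDerivAt_rpow_const (p := 2 * p - 1) (Or.inl hx)).const_mul (6 * p)).sub
    ((hasDerivAt_id x).const_mul 2)).sub
    ((hasDerivAt_rpow_const (p := 2 * p + 1) (Or.inl hx)).const_mul (2 * p + 2))).sub
    ((hasDerivAt_rpow_const (p := p - 2) (Or.inl hx)).const_mul (4 * (p - 1)))
  refine h.congr_deriv ?_
  rw [Q'', show 2 * p - 1 - 1 = 2 * p - 2 by ring, show 2 * p + 1 - 1 = 2 * p by ring,
    show p - 2 - 1 = p - 3 by ring]
  ring

lemma rpow_mul_Q'' (hx : 0 < x) :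
    x ^ (3 - p) * Q'' p x = x ^ (p + 1) * (6 * p * (2 * p - 1) - (2 * p + 2) * (2 * p + 1) * x ^ 2)
      - 2 * x ^ (3 - p) - 4 * (p - 1) * (p - 2) := by
  have e₁ : x ^ (3 - p) * x ^ (2 * p - 2) = x ^ (p + 1) := by rw [← rpow_add hx]; ring_nf
  have e₂ : x ^ (3 - p) * x ^ (2 * p) = x ^ (p + 1) * x ^ 2 := by
    rw [← rpow_add hx, ← rpow_add_natCast hx.ne']; ring_nf
  have e₃ : x ^ (3 - p) * x ^ (p - 3) = 1 := by rw [← rpow_add hx]; simp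
  rw [Q'']
  linear_combination 6 * p * (2 * p - 1) * e₁ - (2 * p + 2) * (2 * p + 1) * e₂
    - 4 * (p - 1) * (p - 2) * e₃

lemma rpow_mul_Q''_ge (hp₀ : 0 ≤ p) (hp₂ : p ≤ 2)
    (hcoeff : (2 * p + 2) * (2 * p + 1) ≤ 6 * p * (2 * p - 1)) (hx₀ : 0 < x) (hx₁ : x ≤ 1) :
    x ^ 3 * (6 * p * (2 * p - 1) - (2 * p + 2) * (2 * p + 1) * x ^ 2) - 2 * x
      - 4 * (p - 1) * (p - 2) ≤ x ^ (3 - p) * Q'' p x := by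
  have hlow : x ^ 3 ≤ x ^ (p + 1) := by
    rw [← rpow_natCast]; exact rpow_le_rpow_of_exponent_ge hx₀ hx₁ (by push_cast; linarith)
  have hhigh : x ^ (3 - p) ≤ x := rpow_le_self_of_le_one hx₀.le hx₁ (by linarith)
  have hc : 0 ≤ 6 * p * (2 * p - 1) - (2 * p + 2) * (2 * p + 1) * x ^ 2 := by
    nlinarith [pow_le_one₀ hx₀.le hx₁ (n := 2), sq_nonneg x]
  rw [rpow_mul_Q'' hx₀]
  nlinarith [mul_le_mul_of_nonneg_right hlow hc]

lemma sqrt_three_quintic_nonneg (hx₀ : 0 ≤ x) (hx₁ : x ≤ 1) :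
    0 ≤ x ^ 3 * (6 * √3 * (2 * √3 - 1) - (2 * √3 + 2) * (2 * √3 + 1) * x ^ 2) - 2 * x
      - 4 * (√3 - 1) * (√3 - 2) := by
  have hs : √3 ^ 2 = 3 := sq_sqrt (by norm_num)
  have hs₁ : 1.732 ≤ √3 := by nlinarith [sqrt_nonneg 3]
  have hfactor : x ^ 3 * (6 * √3 * (2 * √3 - 1) - (2 * √3 + 2) * (2 * √3 + 1) * x ^ 2) - 2 * x
      - 4 * (√3 - 1) * (√3 - 2) = (1 - x) * ((12 * √3 - 20) + (12 * √3 - 22) * (x + x ^ 2)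
        + (14 + 6 * √3) * (x ^ 3 + x ^ 4)) := by
    linear_combination (12 * x ^ 3 - 4 - 4 * x ^ 5) * hs
  rw [hfactor]
  refine mul_nonneg (by linarith) ?_
  nlinarith [pow_nonneg hx₀ 3, pow_nonneg hx₀ 4, sq_nonneg (x - 1/4)]

lemma Q''_sqrt_three_nonneg (hx₀ : 0 < x) (hx₁ : x ≤ 1) : 0 ≤ Q'' √3 x := by
  have hs : √3 ^ 2 = 3 := sq_sqrt (by norm_num)
  have hs₂ : √3 ≤ 2 := by nlinarith [sqrt_nonneg 3]
  refine (mul_nonneg_iff_of_pos_left (rpow_pos_of_pos hx₀ (3 - √3))).1 ?_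
  exact (sqrt_three_quintic_nonneg hx₀.le hx₁).trans
    (rpow_mul_Q''_ge (sqrt_nonneg 3) hs₂ (by nlinarith) hx₀ hx₁)

theorem stmt_19 :
    ConvexOn ℝ (Ioo (0 : ℝ) 1)
      (fun x : ℝ => (3 - x ^ 2) * (1 + x ^ (2 * Real.sqrt 3))
        - 4 * x ^ (Real.sqrt 3 - 1)) := by
  show ConvexOn ℝ (Ioo 0 1) (Q √3)
  refine convexOn_of_hasDerivWithinAt2_nonneg (f' := Q' √3) (f'' := Q'' √3) (convex_Ioo 0 1)
    (fun x hx ↦ (hasDerivAt_Q hx.1.ne').continuousAt.continuousWithinAt) ?_ ?_ ?_ <;>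
    rw [interior_Ioo]
  · exact fun x hx ↦ (hasDerivAt_Q hx.1.ne').hasDerivWithinAt
  · exact fun x hx ↦ (hasDerivAt_Q' hx.1.ne').hasDerivWithinAt
  · exact fun x hx ↦ Q''_sqrt_three_nonneg hx.1 hx.2.le
end
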